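/- arXiv:2006.11170 — 2 statements merged into one kernel-verified Lean document; each statement's English description precedes it below -/
import Mathlib

section
/- Let f : ℕ → (0,∞) be defined by f(1) = f(2) = 1 and f(n) = (log log n)/n for n ≥ 3, let c > 0, μ ∈ ℝ, and let X_1, X_2, … be i.i.d. ∼ N(μ,1). Let μ̂ = (μ̂_n)_{n∈ℕ} be an estimator, i.e. each μ̂_n : ℝⁿ → ℝ is measurable, and set μ̃_n = (Σ_{i=1}^n X_i)/(n+1). Define the events 𝓕_{μ,n} = { (μ − μ̃_n)² ≥ c·f(n) } and 𝓖_n = { (μ̃_n − μ̂_n(X^n))² ≥ (c/2)·f(n) }. If P_μ( 𝓕_{μ,n} ∩ 𝓖_n^c occurs for infinitely many n ) > 0, then for every nonincreasing g : ℕ → (0,∞) with f(n)/g(n) → ∞ one has sup_{τ∈𝒯} E_{X^∞ ∼ N(μ,1)^{⊗ℕ}}[ (μ − μ̂_τ(X^τ))² / g(τ) ] = ∞, where 𝒯 is the collection of all almost-surely finite stopping times with respect to the natural filtration σ(X_1,…,X_n). -/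
open MeasureTheory ProbabilityTheory Filter

/-- The time-robust rate function: `f n = (log log n)/n` for `n ≥ 3`, `f 1 = f 2 = 1`. -/
noncomputable def f (n : ℕ) : ℝ := if n ≤ 2 then 1 else Real.log (Real.log n) / n

/-- The natural filtration of the data: `natFilt X hX n = σ(X_0, …, X_{n-1})`,
the σ-algebra generated by the first `n` observations. -/
noncomputable def natFilt {Ω β : Type*} [mΩ : MeasurableSpace Ω] [MeasurableSpace β]
    (X : ℕ → Ω → β) (hX : ∀ i, Measurable (X i)) : Filtration ℕ mΩ where
  seq n := ⨆ i ∈ Finset.range n, MeasurableSpace.comap (X i) inferInstance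
  mono' := fun _ _ hnm => biSup_mono fun _ hi =>
    Finset.mem_range.mpr (lt_of_lt_of_le (Finset.mem_range.mp hi) hnm)
  le' _ := iSup₂_le fun i _ => (hX i).comap_le

/-!
On `𝓕_{μ,n} ∩ 𝓖_nᶜ` we have `|μ - μ̃_n| ≥ √(c f n)` and `|μ̃_n - μ̂_n| < √(c f n / 2)`, hence
`(μ - μ̂_n)² ≥ (1 - 1/√2)² c f n`; since `f / g → ∞`, the loss `(μ - μ̂_n)² / g n` is uniformly
large on these events once `n` is large. Stopping at the first such `n` in a window `[N, L]`,
with `L` so large that the window catches the event with probability close to the positive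
probability of `𝓕_{μ,n} ∩ 𝓖_nᶜ` i.o., gives bounded stopping times with arbitrarily large
expected loss.
-/

open scoped ENNReal NNReal

section Hitting

variable {Ω : Type*} {m : MeasurableSpace Ω} {P : Measure Ω} {ℱ : Filtration ℕ m}
  {A : ℕ → Set Ω}

lemma exists_stoppingTime_mem_of_lt_measure_frequently
    (hA : ∀ n, MeasurableSet[ℱ n] (A n)) (N : ℕ) {ε : ℝ≥0∞}
    (hε : ε < P {ω | ∃ᶠ n in atTop, ω ∈ A n}) :
    ∃ τ : Ω → ℕ, IsStoppingTime ℱ (fun ω => (τ ω : WithTop ℕ)) ∧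
      ∃ E, MeasurableSet E ∧ ε < P E ∧ ∀ ω ∈ E, N ≤ τ ω ∧ ω ∈ A (τ ω) := by
  set H : ℕ → Set Ω := fun L => ⋃ j ∈ Set.Icc N L, A j
  have hH_mono : Monotone H := fun L L' hL =>
    Set.biUnion_subset_biUnion_left (Set.Icc_subset_Icc le_rfl hL)
  have hsub : {ω | ∃ᶠ n in atTop, ω ∈ A n} ⊆ ⋃ L, H L := fun ω hω => by
    obtain ⟨n, hNn, hn⟩ := frequently_atTop.mp hω N
    exact Set.mem_iUnion.mpr ⟨n, Set.mem_biUnion ⟨hNn, le_rfl⟩ hn⟩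
  obtain ⟨L, hL⟩ := ((tendsto_measure_iUnion_atTop hH_mono).eventually
    (eventually_gt_nhds (hε.trans_le (measure_mono hsub)))).exists
  -- `u n ω` is the proposition `ω ∈ A n`, so hitting `{p | p}` means entering `A n`
  let u : ℕ → Ω → Prop := fun n ω => ω ∈ A n
  have hu : Adapted ℱ u := fun n => (@measurable_mem Ω (A n) (ℱ n)).mpr (hA n)
  refine ⟨hittingBtwn u {p | p} N L, hu.isStoppingTime_hittingBtwn trivial, H L,
    .biUnion (Set.to_countable _) fun j _ => ℱ.le j _ (hA j), hL, fun ω hω => ?_⟩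
  have hex : ∃ j ∈ Set.Icc N L, u j ω ∈ {p | p} := by simpa [H] using hω
  exact ⟨le_hittingBtwn_of_exists hex, hittingBtwn_mem_set hex⟩

lemma exists_stoppingTime_mul_le_lintegral
    (hA : ∀ n, MeasurableSet[ℱ n] (A n)) {Y : ℕ → Ω → ℝ≥0∞} {K ε : ℝ≥0∞}
    (hY : ∀ᶠ n in atTop, ∀ ω ∈ A n, K ≤ Y n ω)
    (hε : ε < P {ω | ∃ᶠ n in atTop, ω ∈ A n}) :
    ∃ τ : Ω → ℕ, IsStoppingTime ℱ (fun ω => (τ ω : WithTop ℕ)) ∧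
      K * ε ≤ ∫⁻ ω, Y (τ ω) ω ∂P := by
  obtain ⟨N, hN⟩ := eventually_atTop.mp hY
  obtain ⟨τ, hτ, E, hE, hεE, hτE⟩ := exists_stoppingTime_mem_of_lt_measure_frequently hA N hε
  refine ⟨τ, hτ, ?_⟩
  calc K * ε ≤ K * P E := by gcongr
    _ = ∫⁻ ω, E.indicator (fun _ => K) ω ∂P := by rw [lintegral_indicator hE, setLIntegral_const]
    _ ≤ ∫⁻ ω, Y (τ ω) ω ∂P := lintegral_mono fun ω => by
        by_cases hω : ω ∈ E
        · simpa [hω] using hN _ (hτE ω hω).1 ω (hτE ω hω).2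
        · simp [hω]

theorem iSup_lintegral_comp_stoppingTime_eq_top
    (hA : ∀ n, MeasurableSet[ℱ n] (A n)) (hio : 0 < P {ω | ∃ᶠ n in atTop, ω ∈ A n})
    {Y : ℕ → Ω → ℝ≥0∞} (hY : ∀ K < ⊤, ∀ᶠ n in atTop, ∀ ω ∈ A n, K ≤ Y n ω) :
    ⨆ (τ : Ω → ℕ) (_ : IsStoppingTime ℱ (fun ω => (τ ω : WithTop ℕ))),
      ∫⁻ ω, Y (τ ω) ω ∂P = ⊤ := by
  obtain ⟨ε, hε0, hε⟩ := ENNReal.lt_iff_exists_nnreal_btwn.mp hio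
  refine ENNReal.eq_top_of_forall_nnreal_le fun r => ?_
  have hε_ne : (ε : ℝ≥0∞) ≠ 0 := hε0.ne'
  obtain ⟨τ, hτ, hle⟩ := exists_stoppingTime_mul_le_lintegral hA
    (hY _ (ENNReal.div_lt_top ENNReal.coe_ne_top hε_ne)) hε
  rw [ENNReal.div_mul_cancel hε_ne ENNReal.coe_ne_top] at hle
  exact hle.trans (le_iSup₂ (f := fun τ (_ : IsStoppingTime ℱ (fun ω => (τ ω : WithTop ℕ))) =>
    ∫⁻ ω, Y (τ ω) ω ∂P) τ hτ)

end Hitting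

lemma one_sub_sqrt_half_sq_mul_le_sq_add {x a b : ℝ} (ha : x ≤ a ^ 2) (hb : b ^ 2 ≤ x / 2) :
    (1 - √2⁻¹) ^ 2 * x ≤ (a + b) ^ 2 := by
  have hx : 0 ≤ x := by nlinarith [sq_nonneg b]
  have hsa : √x ≤ |a| := (Real.sqrt_le_sqrt ha).trans_eq (Real.sqrt_sq_eq_abs a)
  have hsb : |b| ≤ √x * √2⁻¹ := by
    rw [← Real.sqrt_sq_eq_abs, ← Real.sqrt_mul hx]
    exact Real.sqrt_le_sqrt (by linarith)
  have hhalf : √2⁻¹ ≤ 1 := Real.sqrt_le_one.mpr (by norm_num)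
  calc (1 - √2⁻¹) ^ 2 * x = (√x * (1 - √2⁻¹)) ^ 2 := by rw [mul_pow, Real.sq_sqrt hx]; ring
    _ ≤ |a + b| ^ 2 := by
        refine pow_le_pow_left₀ (mul_nonneg (Real.sqrt_nonneg x) (by linarith)) ?_ 2
        nlinarith [abs_sub_abs_le_abs_add a b]
    _ = (a + b) ^ 2 := sq_abs _

section NaturalFiltration

variable {Ω β : Type*} [MeasurableSpace Ω] [MeasurableSpace β] {X : ℕ → Ω → β}
  (hX : ∀ i, Measurable (X i))

lemma measurable_natFilt_of_lt {n i : ℕ} (hi : i < n) : Measurable[natFilt X hX n] (X i) :=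
  Measurable.of_comap_le <| le_biSup (fun i => MeasurableSpace.comap (X i) inferInstance)
    (Finset.mem_range.mpr hi)

lemma measurable_natFilt_initialSegment (n : ℕ) :
    Measurable[natFilt X hX n] (fun ω (i : Fin n) => X i ω) :=
  @measurable_pi_lambda Ω (Fin n) (fun _ => β) (natFilt X hX n) _ _
    fun i => measurable_natFilt_of_lt hX i.isLt

end NaturalFiltration

theorem case_far_from_posterior_mean_with_small_G_general
    (c : ℝ) (hc : 0 < c) (μ : ℝ)
    (Ω : Type) (mΩ : MeasurableSpace Ω) (P : Measure Ω) [IsProbabilityMeasure P]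
    (X : ℕ → Ω → ℝ) (hX : ∀ i, Measurable (X i))
    (muhat : (n : ℕ) → (Fin n → ℝ) → ℝ) (hmeas : ∀ n, Measurable (muhat n))
    (mutilde : ℕ → Ω → ℝ)
    (hmutilde : mutilde = fun n ω => (∑ i ∈ Finset.range n, X i ω) / ((n : ℝ) + 1))
    (hio : 0 < P {ω | ∃ᶠ n in atTop,
      c * f n ≤ (μ - mutilde n ω) ^ 2 ∧
        (mutilde n ω - muhat n fun i => X i.val ω) ^ 2 < c / 2 * f n})
    (g : ℕ → ℝ) (hgpos : ∀ n, 0 < g n)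
    (hfg : Tendsto (fun n => f n / g n) atTop atTop) :
    ⨆ (τ : Ω → ℕ) (_ : IsStoppingTime (natFilt X hX) (fun ω => (τ ω : WithTop ℕ))),
        ∫⁻ ω, ENNReal.ofReal
          ((μ - muhat (τ ω) fun i => X i.val ω) ^ 2 / g (τ ω)) ∂P = ⊤ := by
  have hmutilde_meas n : Measurable[natFilt X hX n] (mutilde n) := by
    subst hmutilde
    exact (Finset.measurable_sum _ fun i hi =>
      measurable_natFilt_of_lt hX (Finset.mem_range.mp hi)).div_const _
  have hmuhat_meas n : Measurable[natFilt X hX n] (fun ω => muhat n fun i => X i.val ω) :=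
    (hmeas n).comp (measurable_natFilt_initialSegment hX n)
  refine iSup_lintegral_comp_stoppingTime_eq_top
    (Y := fun n ω => ENNReal.ofReal ((μ - muhat n fun i => X i.val ω) ^ 2 / g n))
    (fun n => ?_) hio fun K hK => ?_
  · exact (measurableSet_le measurable_const
      ((measurable_const.sub (hmutilde_meas n)).pow_const 2)).inter
      (measurableSet_lt (((hmutilde_meas n).sub (hmuhat_meas n)).pow_const 2) measurable_const)
  set κ := (1 - √2⁻¹) ^ 2 * c
  have hκ : 0 < κ := by
    have : √2⁻¹ < 1 := (Real.sqrt_lt' one_pos).mpr (by norm_num)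
    have : 0 < 1 - √2⁻¹ := by linarith
    positivity
  filter_upwards [hfg.eventually_ge_atTop (K.toReal / κ)] with n hn ω ⟨hF, hG⟩
  have hsq : κ * f n ≤ (μ - muhat n fun i => X i.val ω) ^ 2 := by
    have := one_sub_sqrt_half_sq_mul_le_sq_add hF (b := mutilde n ω - muhat n fun i => X i.val ω)
      (by linarith)
    rwa [sub_add_sub_cancel, ← mul_assoc] at this
  rw [ENNReal.le_ofReal_iff_toReal_le hK.ne (div_nonneg (sq_nonneg _) (hgpos n).le)]
  calc K.toReal ≤ κ * (f n / g n) := (div_le_iff₀' hκ).mp hn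
    _ = κ * f n / g n := by ring
    _ ≤ _ := div_le_div_of_nonneg_right hsq (hgpos n).le

/-- with `X 0, X 1, …` i.i.d. `N(μ,1)`, `μ̃ n = (Σ_{i<n} X i)/(n+1)` the
posterior mean under the standard Gaussian prior, and events
`𝓕_{μ,n} = {(μ - μ̃ n)² ≥ c f n}` and `𝓖 n = {(μ̃ n - μ̂ n (X^n))² ≥ (c/2) f n}`: if
`P(𝓕_{μ,n} ∩ 𝓖 nᶜ  i.o.) > 0` then for every nonincreasing `g : ℕ → (0,∞)` with
`f n / g n → ∞`, the supremum over a.s.-finite stopping times `τ` of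
`E[(μ - μ̂_τ(X^τ))²/g(τ)]` is infinite. -/
theorem case_far_from_posterior_mean_with_small_G
    (c : ℝ) (hc : 0 < c) (μ : ℝ)
    (Ω : Type) (mΩ : MeasurableSpace Ω) (P : Measure Ω) [IsProbabilityMeasure P]
    (X : ℕ → Ω → ℝ) (hX : ∀ i, Measurable (X i))
    (hindep : iIndepFun X P)
    (hlaw : ∀ i, Measure.map (X i) P = gaussianReal μ 1)
    (muhat : (n : ℕ) → (Fin n → ℝ) → ℝ) (hmeas : ∀ n, Measurable (muhat n))
    (mutilde : ℕ → Ω → ℝ)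
    (hmutilde : mutilde = fun n ω => (∑ i ∈ Finset.range n, X i ω) / ((n : ℝ) + 1))
    (hio : 0 < P {ω | ∃ᶠ n in atTop,
      c * f n ≤ (μ - mutilde n ω) ^ 2 ∧
        (mutilde n ω - muhat n fun i => X i.val ω) ^ 2 < c / 2 * f n})
    (g : ℕ → ℝ) (hgpos : ∀ n, 0 < g n) (hganti : Antitone g)
    (hfg : Tendsto (fun n => f n / g n) atTop atTop) :
    ⨆ (τ : Ω → ℕ) (_ : IsStoppingTime (natFilt X hX) (fun ω => (τ ω : WithTop ℕ))),
        ∫⁻ ω, ENNReal.ofReal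
          ((μ - muhat (τ ω) fun i => X i.val ω) ^ 2 / g (τ ω)) ∂P = ⊤ :=
  case_far_from_posterior_mean_with_small_G_general c hc μ Ω mΩ P X hX muhat hmeas mutilde hmutilde
    hio g hgpos hfg
end

section
/- Let f : ℕ → (0,∞) be defined by f(1) = f(2) = 1 and f(n) = (log log n)/n for n ≥ 3, and let c > 0 be such that for every μ ∈ ℝ, with X_1, X_2, … i.i.d. ∼ N(μ,1) and μ̃_n = (Σ_{i=1}^n X_i)/(n+1), one has P_μ( (μ − μ̃_n)² ≥ c·f(n) for infinitely many n ) = 1. Then for every estimator μ̂ = (μ̂_n)_{n∈ℕ} (each μ̂_n : ℝⁿ → ℝ measurable), at least one of the following holds: (a) there exists C > 0 with sup_{μ∈ℝ} sup_{τ∈𝒯} E_{X^∞∼N(μ,1)^{⊗ℕ}}[ (μ − μ̂_τ(X^τ))² / f(τ) ] ≥ C, and for every nonincreasing g : ℕ → (0,∞) with f(n)/g(n) → ∞, sup_{μ∈ℝ} sup_{τ∈𝒯} E_{X^∞∼N(μ,1)^{⊗ℕ}}[ (μ − μ̂_τ(X^τ))² / g(τ) ] = ∞; or (b) for every μ ∈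 ℝ, P_μ( (μ̃_n − μ̂_n(X^n))² ≥ (c/2)·f(n) for infinitely many n ) = 1. -/
/-!
If (b) fails for some `μ₀`, then with positive probability `(μ̃ₙ - μ̂ₙ)² < (c/2) f(n)` eventually,
while almost surely `(μ₀ - μ̃ₙ)² ≥ c f(n)` infinitely often; on the intersection, the triangle
inequality gives `(μ₀ - μ̂ₙ)² ≥ (1 - 1/√2)² c f(n) ≥ (c/12) f(n)` infinitely often. Stopping at
the first such `n` in a window `[N, M]` with `M` large yields, for every `N`, a stopping time
`τ ≥ N` whose weighted risk at `μ₀` is bounded below by a fixed multiple of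
`inf_{n ≥ N} f(n)/h(n)`. With `h = f` this is (a)'s lower bound, and for `f/g → ∞` it is
unbounded.
-/

open MeasureTheory ProbabilityTheory Filter Topology
open scoped ENNReal

lemma f_pos (n : ℕ) : 0 < f n := by
  unfold f
  split_ifs with h
  · exact one_pos
  · have h3 : (3 : ℝ) ≤ n := by exact_mod_cast (not_le.mp h)
    have hlog : 1 < Real.log n := by
      rw [Real.lt_log_iff_exp_lt (by linarith)]
      linarith [Real.exp_one_lt_d9]
    exact div_pos (Real.log_pos hlog) (by linarith)

lemma le_sq_add_of_le_sq_of_sq_lt {a b c F : ℝ} (ha : c * F ≤ a ^ 2) (hb : b ^ 2 < c / 2 * F) :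
    c / 12 * F ≤ (a + b) ^ 2 := by
  nlinarith [sq_nonneg (3 * a + 4 * b)]

lemma ENNReal.eq_top_of_forall_ofReal_mul_le {r S : ℝ≥0∞} (hr : r ≠ 0)
    (h : ∀ L : ℝ, ENNReal.ofReal L * r ≤ S) : S = ⊤ := by
  have hlim : Tendsto (fun L : ℝ => ENNReal.ofReal L * r) atTop (𝓝 ⊤) := by
    simpa only [ENNReal.top_mul hr] using
      ENNReal.Tendsto.mul_const (b := r) ENNReal.tendsto_ofReal_atTop (Or.inl ENNReal.top_ne_zero)
  exact top_unique (le_of_tendsto' hlim h)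

lemma frequently_ae_frequently_le_sq_add {Ω : Type*} [MeasurableSpace Ω] {μ : Measure Ω}
    {a b : ℕ → Ω → ℝ} {F : ℕ → ℝ} {c : ℝ}
    (ha : ∀ᵐ ω ∂μ, ∃ᶠ n in atTop, c * F n ≤ a n ω ^ 2)
    (hb : ∃ᵐ ω ∂μ, ∀ᶠ n in atTop, b n ω ^ 2 < c / 2 * F n) :
    ∃ᵐ ω ∂μ, ∃ᶠ n in atTop, c / 12 * F n ≤ (a n ω + b n ω) ^ 2 :=
  (hb.and_eventually ha).mono fun _ ⟨hbω, haω⟩ =>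
    (haω.and_eventually hbω).mono fun _ ⟨h₁, h₂⟩ => le_sq_add_of_le_sq_of_sq_lt h₁ h₂

lemma measurable_natFilt_prefix {Ω β : Type*} [MeasurableSpace Ω] [MeasurableSpace β]
    {X : ℕ → Ω → β} (hX : ∀ i, Measurable (X i)) (n : ℕ) :
    Measurable[natFilt X hX n] fun ω (i : Fin n) => X i ω := by
  rw [measurable_iff_comap_le, MeasurableSpace.pi, MeasurableSpace.comap_iSup]
  refine iSup_le fun i => ?_
  rw [MeasurableSpace.comap_comp]
  exact le_biSup (fun j => MeasurableSpace.comap (X j) inferInstance)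
    (Finset.mem_range.mpr i.isLt)

/-- The stopping time is the hitting time of `s` in a window `[N, N + M]`, where `M` is chosen by
continuity from below so that the process visits `s` in that window on a set of measure `> r`. -/
theorem MeasureTheory.Adapted.exists_isStoppingTime_mem_of_frequently {Ω β : Type*}
    {m : MeasurableSpace Ω} [MeasurableSpace β] {ℱ : Filtration ℕ m} {μ : Measure Ω}
    {u : ℕ → Ω → β} (hu : Adapted ℱ u) {s : Set β} (hs : MeasurableSet s) {A : Set Ω}
    (hA : ∀ ω ∈ A, ∃ᶠ n in atTop, u n ω ∈ s) (N : ℕ) {r : ℝ≥0∞} (hr : r < μ A) :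
    ∃ τ : Ω → ℕ, IsStoppingTime ℱ (fun ω => (τ ω : WithTop ℕ)) ∧ (∀ ω, N ≤ τ ω) ∧
      ∃ E, MeasurableSet E ∧ r < μ E ∧ ∀ ω ∈ E, u (τ ω) ω ∈ s := by
  set E : ℕ → Set Ω := fun M => ⋃ j ∈ Set.Icc N (N + M), u j ⁻¹' s
  have hE_mono : Monotone E := fun _ _ hMM' =>
    Set.biUnion_subset_biUnion_left (Set.Icc_subset_Icc_right (by omega))
  have hA_sub : A ⊆ ⋃ M, E M := fun ω hω => by
    obtain ⟨n, hn, hns⟩ := (frequently_atTop.mp (hA ω hω)) N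
    exact Set.mem_iUnion.mpr ⟨n - N, Set.mem_biUnion ⟨hn, by omega⟩ hns⟩
  obtain ⟨M, hM⟩ : ∃ M, r < μ (E M) := lt_iSup_iff.mp <|
    hr.trans_le ((measure_mono hA_sub).trans_eq hE_mono.measure_iUnion)
  refine ⟨hittingBtwn u s N (N + M), hu.isStoppingTime_hittingBtwn hs,
    le_hittingBtwn (Nat.le_add_right N M), E M,
    .biUnion (Set.to_countable _) fun j _ => (hu j).mono (ℱ.le j) le_rfl hs, hM, fun ω hω => ?_⟩
  exact hittingBtwn_mem_set (by simpa [E] using hω)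

theorem le_iSup_lintegral_sq_div_of_frequently {Ω : Type*} [MeasurableSpace Ω]
    {P : ℝ → Measure Ω} {X : ℕ → Ω → ℝ} (hX : ∀ i, Measurable (X i))
    {muhat : (n : ℕ) → (Fin n → ℝ) → ℝ} (hmeas : ∀ n, Measurable (muhat n)) {μ₀ : ℝ}
    {w : ℕ → ℝ} {r : ℝ≥0∞}
    (hr : r < P μ₀ {ω | ∃ᶠ n in atTop, w n ≤ (μ₀ - muhat n fun i => X i ω) ^ 2})
    {h : ℕ → ℝ} (hh : ∀ n, 0 < h n) {L : ℝ} {N : ℕ} (hL : ∀ n ≥ N, L * h n ≤ w n) :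
    ENNReal.ofReal L * r ≤
      ⨆ (μ : ℝ) (τ : Ω → ℕ) (_ : IsStoppingTime (natFilt X hX) (fun ω => (τ ω : WithTop ℕ))),
        ∫⁻ ω, ENNReal.ofReal ((μ - muhat (τ ω) fun i => X i.val ω) ^ 2 / h (τ ω)) ∂(P μ) := by
  set u : ℕ → Ω → ℝ := fun n ω => (μ₀ - muhat n fun i => X i ω) ^ 2 - w n
  have hu : Adapted (natFilt X hX) u := fun n =>
    ((measurable_const.sub ((hmeas n).comp (measurable_natFilt_prefix hX n))).pow_const 2).sub
      measurable_const
  obtain ⟨τ, hτ, hNτ, E, hE, hrE, hτE⟩ := hu.exists_isStoppingTime_mem_of_frequently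
    measurableSet_Ici (fun _ hω => hω.mono fun _ hn => sub_nonneg.mpr hn) N hr
  have hbound : ∀ ω ∈ E, ENNReal.ofReal L ≤
      ENNReal.ofReal ((μ₀ - muhat (τ ω) fun i => X i.val ω) ^ 2 / h (τ ω)) := fun ω hω => by
    have hwτ := hτE ω hω
    simp only [u, Set.mem_Ici, sub_nonneg] at hwτ
    exact ENNReal.ofReal_le_ofReal <|
      (le_div_iff₀ (hh (τ ω))).mpr ((hL (τ ω) (hNτ ω)).trans hwτ)
  calc ENNReal.ofReal L * r
      ≤ ENNReal.ofReal L * P μ₀ E := by gcongr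
    _ = ∫⁻ _ in E, ENNReal.ofReal L ∂(P μ₀) := (setLIntegral_const E _).symm
    _ ≤ ∫⁻ ω in E, ENNReal.ofReal
          ((μ₀ - muhat (τ ω) fun i => X i.val ω) ^ 2 / h (τ ω)) ∂(P μ₀) :=
      setLIntegral_mono' hE hbound
    _ ≤ ∫⁻ ω, ENNReal.ofReal
          ((μ₀ - muhat (τ ω) fun i => X i.val ω) ^ 2 / h (τ ω)) ∂(P μ₀) :=
      setLIntegral_le_lintegral E _
    _ ≤ _ := by
      exact le_iSup_of_le μ₀ <| le_iSup_of_le τ <| le_iSup_of_le hτ le_rfl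

theorem estimator_dichotomy_general
    (Ω : Type) (mΩ : MeasurableSpace Ω) (P : ℝ → Measure Ω)
    (X : ℕ → Ω → ℝ) (hX : ∀ i, Measurable (X i))
    (mutilde : ℕ → Ω → ℝ)
    (c : ℝ) (hc : 0 < c)
    (hcio : ∀ μ : ℝ, ∀ᵐ ω ∂P μ, ∃ᶠ n in atTop, c * f n ≤ (μ - mutilde n ω) ^ 2)
    (muhat : (n : ℕ) → (Fin n → ℝ) → ℝ) (hmeas : ∀ n, Measurable (muhat n)) :
    (∃ C : ℝ, 0 < C ∧
        ENNReal.ofReal C ≤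
          (⨆ (μ : ℝ) (τ : Ω → ℕ) (_ : IsStoppingTime (natFilt X hX) (fun ω => (τ ω : WithTop ℕ))),
            ∫⁻ ω, ENNReal.ofReal
              ((μ - muhat (τ ω) fun i => X i.val ω) ^ 2 / f (τ ω)) ∂(P μ)) ∧
        ∀ g : ℕ → ℝ, (∀ n, 0 < g n) → Antitone g →
          Tendsto (fun n => f n / g n) atTop atTop →
          (⨆ (μ : ℝ) (τ : Ω → ℕ) (_ : IsStoppingTime (natFilt X hX) (fun ω => (τ ω : WithTop ℕ))),
            ∫⁻ ω, ENNReal.ofReal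
              ((μ - muhat (τ ω) fun i => X i.val ω) ^ 2 / g (τ ω)) ∂(P μ)) = ⊤) ∨
      (∀ μ : ℝ, ∀ᵐ ω ∂P μ, ∃ᶠ n in atTop,
        c / 2 * f n ≤ (mutilde n ω - muhat n fun i => X i.val ω) ^ 2) := by
  refine or_iff_not_imp_right.mpr fun hb => ?_
  push Not at hb
  obtain ⟨μ₀, hμ₀⟩ := hb
  have hfreq := frequently_ae_frequently_le_sq_add (hcio μ₀) hμ₀
  simp only [sub_add_sub_cancel] at hfreq
  obtain ⟨r, hr0, hrA⟩ := exists_between (pos_iff_ne_zero.mpr (frequently_ae_iff.mp hfreq))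
  have hr_top : r ≠ ⊤ := ne_top_of_lt hrA
  refine ⟨c / 12 * r.toReal, mul_pos (by positivity) (ENNReal.toReal_pos hr0.ne' hr_top), ?_,
    fun g hg _ hfg => ENNReal.eq_top_of_forall_ofReal_mul_le hr0.ne' fun L => ?_⟩
  · rw [ENNReal.ofReal_mul (by positivity), ENNReal.ofReal_toReal hr_top]
    exact le_iSup_lintegral_sq_div_of_frequently hX hmeas hrA f_pos (N := 0) fun _ _ => le_rfl
  · obtain ⟨N, hN⟩ := eventually_atTop.mp (hfg.eventually_ge_atTop (L / (c / 12)))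
    refine le_iSup_lintegral_sq_div_of_frequently hX hmeas hrA hg (N := N) fun n hn => ?_
    have hLn := hN n hn
    rw [div_le_div_iff₀ (by positivity) (hg n)] at hLn
    linarith

/-- suppose `c > 0` is such that for every `μ`, almost surely
`(μ - μ̃ n)² ≥ c f n` infinitely often, where `μ̃ n = (Σ_{i<n} X i)/(n+1)` is the posterior
mean for the standard Gaussian prior and the data is i.i.d. `N(μ,1)`. Then every estimator
`μ̂` satisfies (a): a positive lower bound `C` on `sup_μ sup_τ E[(μ - μ̂_τ)²/f(τ)]` together
with `sup_μ sup_τ E[(μ - μ̂_τ)²/g(τ)] = ∞` for every nonincreasing `g` with `f/g → ∞`; or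
(b): for every `μ`, almost surely `(μ̃ n - μ̂ n (X^n))² ≥ (c/2) f n` infinitely often. -/
theorem estimator_dichotomy
    (Ω : Type) (mΩ : MeasurableSpace Ω) (P : ℝ → Measure Ω)
    (hP : ∀ μ, IsProbabilityMeasure (P μ))
    (X : ℕ → Ω → ℝ) (hX : ∀ i, Measurable (X i))
    (hindep : ∀ μ, iIndepFun X (P μ))
    (hlaw : ∀ μ i, Measure.map (X i) (P μ) = gaussianReal μ 1)
    (mutilde : ℕ → Ω → ℝ)
    (hmutilde : mutilde = fun n ω => (∑ i ∈ Finset.range n, X i ω) / ((n : ℝ) + 1))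
    (c : ℝ) (hc : 0 < c)
    (hcio : ∀ μ : ℝ, ∀ᵐ ω ∂P μ, ∃ᶠ n in atTop, c * f n ≤ (μ - mutilde n ω) ^ 2)
    (muhat : (n : ℕ) → (Fin n → ℝ) → ℝ) (hmeas : ∀ n, Measurable (muhat n)) :
    (∃ C : ℝ, 0 < C ∧
        ENNReal.ofReal C ≤
          (⨆ (μ : ℝ) (τ : Ω → ℕ) (_ : IsStoppingTime (natFilt X hX) (fun ω => (τ ω : WithTop ℕ))),
            ∫⁻ ω, ENNReal.ofReal
              ((μ - muhat (τ ω) fun i => X i.val ω) ^ 2 / f (τ ω)) ∂(P μ)) ∧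
        ∀ g : ℕ → ℝ, (∀ n, 0 < g n) → Antitone g →
          Tendsto (fun n => f n / g n) atTop atTop →
          (⨆ (μ : ℝ) (τ : Ω → ℕ) (_ : IsStoppingTime (natFilt X hX) (fun ω => (τ ω : WithTop ℕ))),
            ∫⁻ ω, ENNReal.ofReal
              ((μ - muhat (τ ω) fun i => X i.val ω) ^ 2 / g (τ ω)) ∂(P μ)) = ⊤) ∨
      (∀ μ : ℝ, ∀ᵐ ω ∂P μ, ∃ᶠ n in atTop,
        c / 2 * f n ≤ (mutilde n ω - muhat n fun i => X i.val ω) ^ 2) :=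
  estimator_dichotomy_general Ω mΩ P X hX mutilde c hc hcio muhat hmeas
end
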